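/- arXiv:2002.09214 — 4 statements merged into one kernel-verified Lean document; each statement's English description precedes it below -/
import Mathlib

section
/- The mean density function R, defined for 0 < φ < φ* by R(φ) := Σ_{k≥0} k · P_φ({k}) = Σ_{k≥0} k·φ^k/(Z(φ)·g(k)!), is strictly increasing on the interval (0, φ*). -/
set_option maxHeartbeats 1000000


open scoped ENNReal BigOperators

/-- `g(k)! = ∏_{i=1}^k g(i)`, with `g(0)! = 1`. -/
noncomputable def gfact (g : ℕ → ℝ) (k : ℕ) : ℝ := ∏ i ∈ Finset.Icc 1 k, g i

/-- The partition function `Z(s) = Σ_{k≥0} s^k / g(k)!`. -/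
noncomputable def Zfun (g : ℕ → ℝ) (s : ℝ) : ℝ := ∑' k : ℕ, s ^ k / gfact g k

/-- `φstar` is the radius of convergence of the power series `Z`. -/
def IsConvRadius (g : ℕ → ℝ) (φstar : ℝ≥0∞) : Prop :=
  (∀ s : ℝ, 0 ≤ s → ENNReal.ofReal s < φstar →
      Summable (fun k : ℕ => s ^ k / gfact g k)) ∧
  (∀ s : ℝ, 0 ≤ s → Summable (fun k : ℕ => s ^ k / gfact g k) →
      ENNReal.ofReal s ≤ φstar)

/-- The one-site zero range weight `P_φ({k}) = φ^k / (Z(φ) g(k)!)`. -/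
noncomputable def Pzr (g : ℕ → ℝ) (φ : ℝ) (k : ℕ) : ℝ := φ ^ k / (Zfun g φ * gfact g k)

lemma gfact_pos (g : ℕ → ℝ) (hgpos : ∀ k : ℕ, 1 ≤ k → 0 < g k) (k : ℕ) :
    0 < gfact g k := by
  apply Finset.prod_pos
  intro i hi
  exact hgpos i (Finset.mem_Icc.mp hi).1

/-- Summability of `k * s^k / gfact g k` strictly inside the radius. -/
lemma sumA (g : ℕ → ℝ) (hgpos : ∀ k : ℕ, 1 ≤ k → 0 < g k) (φstar : ℝ≥0∞)
    (hrad : IsConvRadius g φstar) (s : ℝ) (hs : 0 ≤ s)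
    (h : ENNReal.ofReal s < φstar) :
    Summable (fun k : ℕ => (k : ℝ) * s ^ k / gfact g k) := by
  obtain ⟨r, hr0, hsr, hrs⟩ := ENNReal.lt_iff_exists_real_btwn.mp h
  have hsr' : s < r := by
    by_contra hc
    push_neg at hc
    exact absurd (ENNReal.ofReal_le_ofReal hc) (not_le.mpr hsr)
  have hrpos : 0 < r := lt_of_le_of_lt hs hsr'
  have hrsum : Summable (fun k : ℕ => r ^ k / gfact g k) := hrad.1 r hr0 hrs
  -- terms of convergent series are bounded
  have htend := hrsum.tendsto_atTop_zero
  obtain ⟨M, hM⟩ := htend.bddAbove_range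
  have hM0 : 0 ≤ M := hM ⟨0, rfl⟩ |>.trans' (by
    simp [gfact])
  have hq : s / r < 1 := (div_lt_one hrpos).mpr hsr'
  have hq0 : 0 ≤ s / r := div_nonneg hs hr0
  have hgeom : Summable (fun k : ℕ => (k : ℝ) * (s / r) ^ k) := by
    simpa using summable_pow_mul_geometric_of_norm_lt_one 1
      (r := s / r) (by rwa [Real.norm_eq_abs, abs_of_nonneg hq0])
  refine Summable.of_nonneg_of_le ?_ ?_ (hgeom.mul_left M)
  · intro k
    exact div_nonneg (mul_nonneg (Nat.cast_nonneg k) (pow_nonneg hs k))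
      (gfact_pos g hgpos k).le
  · intro k
    have hb : r ^ k / gfact g k ≤ M := hM ⟨k, rfl⟩
    have key : (k : ℝ) * s ^ k / gfact g k
        = ((k : ℝ) * (s / r) ^ k) * (r ^ k / gfact g k) := by
      have hW := (gfact_pos g hgpos k).ne'
      rw [div_pow]
      field_simp
    rw [key, mul_comm M]
    apply mul_le_mul_of_nonneg_left hb
    exact mul_nonneg (Nat.cast_nonneg k) (pow_nonneg hq0 k)

lemma Zfun_pos (g : ℕ → ℝ) (hgpos : ∀ k : ℕ, 1 ≤ k → 0 < g k) (s : ℝ) (hs : 0 ≤ s)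
    (hsum : Summable (fun k : ℕ => s ^ k / gfact g k)) : 0 < Zfun g s := by
  rw [Zfun]
  refine Summable.tsum_pos hsum (fun k => div_nonneg (pow_nonneg hs k) (gfact_pos g hgpos k).le) 0 ?_
  simp [gfact]

/-- The mean density `R(φ) = Σ_k k φ^k/(Z(φ) g(k)!)` is strictly increasing on
the interval `(0, φ*)`. -/
theorem stmt4 (g : ℕ → ℝ) (hmono : Monotone g) (hg0 : g 0 = 0)
    (hgpos : ∀ k : ℕ, 1 ≤ k → 0 < g k)
    (φstar : ℝ≥0∞) (hφstar : 0 < φstar) (hrad : IsConvRadius g φstar) :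
    StrictMonoOn (fun φ : ℝ => ∑' k : ℕ, (k : ℝ) * Pzr g φ k)
      {φ : ℝ | 0 < φ ∧ ENNReal.ofReal φ < φstar} := by
  intro φ₁ h₁ φ₂ h₂ hlt
  obtain ⟨h₁0, h₁s⟩ := h₁
  obtain ⟨h₂0, h₂s⟩ := h₂
  set W := fun k : ℕ => gfact g k with hW
  have hWpos : ∀ k, 0 < W k := gfact_pos g hgpos
  set f₁ : ℕ → ℝ := fun k => φ₁ ^ k / W k with hf₁
  set f₂ : ℕ → ℝ := fun k => φ₂ ^ k / W k with hf₂
  set a₁ : ℕ → ℝ := fun k => (k : ℝ) * φ₁ ^ k / W k with ha₁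
  set a₂ : ℕ → ℝ := fun k => (k : ℝ) * φ₂ ^ k / W k with ha₂
  have hf₁s : Summable f₁ := hrad.1 φ₁ h₁0.le h₁s
  have hf₂s : Summable f₂ := hrad.1 φ₂ h₂0.le h₂s
  have ha₁s : Summable a₁ := sumA g hgpos φstar hrad φ₁ h₁0.le h₁s
  have ha₂s : Summable a₂ := sumA g hgpos φstar hrad φ₂ h₂0.le h₂s
  have hZ₁ : 0 < Zfun g φ₁ := Zfun_pos g hgpos φ₁ h₁0.le hf₁s
  have hZ₂ : 0 < Zfun g φ₂ := Zfun_pos g hgpos φ₂ h₂0.le hf₂s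
  -- nonnegativity
  have hf₁n : ∀ k, 0 ≤ f₁ k := fun k =>
    div_nonneg (pow_nonneg h₁0.le k) (hWpos k).le
  have hf₂n : ∀ k, 0 ≤ f₂ k := fun k =>
    div_nonneg (pow_nonneg h₂0.le k) (hWpos k).le
  have ha₁n : ∀ k, 0 ≤ a₁ k := fun k =>
    div_nonneg (mul_nonneg (Nat.cast_nonneg k) (pow_nonneg h₁0.le k)) (hWpos k).le
  have ha₂n : ∀ k, 0 ≤ a₂ k := fun k =>
    div_nonneg (mul_nonneg (Nat.cast_nonneg k) (pow_nonneg h₂0.le k)) (hWpos k).le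
  -- rewrite the function values
  have hval : ∀ φ : ℝ, (∑' k : ℕ, (k : ℝ) * Pzr g φ k)
      = (∑' k : ℕ, (k : ℝ) * φ ^ k / W k) / Zfun g φ := by
    intro φ
    rw [div_eq_mul_inv, ← tsum_mul_right]
    apply tsum_congr
    intro k
    rw [Pzr]
    rw [div_eq_mul_inv, mul_inv, div_eq_mul_inv]
    ring
  simp only [hval]
  rw [div_lt_div_iff₀ hZ₁ hZ₂]
  show (∑' k, a₁ k) * Zfun g φ₂ < (∑' k, a₂ k) * Zfun g φ₁
  have hZ₁eq : Zfun g φ₁ = ∑' k, f₁ k := rfl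
  have hZ₂eq : Zfun g φ₂ = ∑' k, f₂ k := rfl
  rw [hZ₁eq, hZ₂eq]
  have hP₁ : Summable (fun p : ℕ × ℕ => a₁ p.1 * f₂ p.2) :=
    ha₁s.mul_of_nonneg hf₂s ha₁n hf₂n
  have hP₂ : Summable (fun p : ℕ × ℕ => a₂ p.1 * f₁ p.2) :=
    ha₂s.mul_of_nonneg hf₁s ha₂n hf₁n
  rw [Summable.tsum_mul_tsum ha₁s hf₂s hP₁, Summable.tsum_mul_tsum ha₂s hf₁s hP₂]
  rw [← sub_pos, ← Summable.tsum_sub hP₂ hP₁]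
  set F : ℕ × ℕ → ℝ := fun p => a₂ p.1 * f₁ p.2 - a₁ p.1 * f₂ p.2 with hF
  have hFs : Summable F := hP₂.sub hP₁
  have hFswap : Summable (fun p : ℕ × ℕ => F p.swap) :=
    (Equiv.prodComm ℕ ℕ).summable_iff.mpr hFs
  have hswapsum : (∑' p : ℕ × ℕ, F p.swap) = ∑' p, F p :=
    (Equiv.prodComm ℕ ℕ).tsum_eq F
  have key : 0 < ∑' p : ℕ × ℕ, (F p + F p.swap) := by
    refine Summable.tsum_pos (hFs.add hFswap) ?_ ((1:ℕ),(0:ℕ)) ?_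
    · rintro ⟨k, j⟩
      show 0 ≤ F (k, j) + F (j, k)
      have heq : F (k, j) + F (j, k)
          = (((k : ℝ) - j) * (φ₂ ^ k * φ₁ ^ j - φ₁ ^ k * φ₂ ^ j)) / (W k * W j) := by
        have hWk := (hWpos k).ne'
        have hWj := (hWpos j).ne'
        simp only [hF, ha₁, ha₂, hf₁, hf₂]
        rw [div_mul_div_comm, div_mul_div_comm, div_mul_div_comm, div_mul_div_comm,
          div_sub_div_same, div_sub_div_same,
          div_add_div _ _ (mul_ne_zero hWk hWj) (mul_ne_zero hWj hWk),
          div_eq_div_iff (by positivity) (by positivity)]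
        ring
      rw [heq]
      apply div_nonneg _ (mul_nonneg (hWpos k).le (hWpos j).le)
      rcases le_total j k with hjk | hjk
      · apply mul_nonneg
        · simpa using (Nat.cast_le (α := ℝ)).mpr hjk
        · rw [sub_nonneg]
          obtain ⟨d, rfl⟩ := Nat.exists_eq_add_of_le hjk
          have : φ₁ ^ d ≤ φ₂ ^ d := pow_le_pow_left₀ h₁0.le hlt.le d
          calc φ₁ ^ (j + d) * φ₂ ^ j = (φ₁ ^ j * φ₂ ^ j) * φ₁ ^ d := by ring
            _ ≤ (φ₁ ^ j * φ₂ ^ j) * φ₂ ^ d := by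
                apply mul_le_mul_of_nonneg_left this
                  (mul_nonneg (pow_nonneg h₁0.le j) (pow_nonneg h₂0.le j))
            _ = φ₂ ^ (j + d) * φ₁ ^ j := by ring
      · have h1 : ((k : ℝ) - j) ≤ 0 := by
          simp only [sub_nonpos]
          exact_mod_cast hjk
        have h2 : φ₂ ^ k * φ₁ ^ j - φ₁ ^ k * φ₂ ^ j ≤ 0 := by
          rw [sub_nonpos]
          obtain ⟨d, rfl⟩ := Nat.exists_eq_add_of_le hjk
          have : φ₁ ^ d ≤ φ₂ ^ d := pow_le_pow_left₀ h₁0.le hlt.le d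
          calc φ₂ ^ k * φ₁ ^ (k + d) = (φ₁ ^ k * φ₂ ^ k) * φ₁ ^ d := by ring
            _ ≤ (φ₁ ^ k * φ₂ ^ k) * φ₂ ^ d := by
                apply mul_le_mul_of_nonneg_left this
                  (mul_nonneg (pow_nonneg h₁0.le k) (pow_nonneg h₂0.le k))
            _ = φ₁ ^ k * φ₂ ^ (k + d) := by ring
        nlinarith [h1, h2]
    · show 0 < F (1, 0) + F (0, 1)
      have hW0 : W 0 = 1 := by simp [hW, gfact]
      have : F (1, 0) + F (0, 1) = (φ₂ - φ₁) / W 1 := by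
        simp only [hF, ha₁, ha₂, hf₁, hf₂, hW0]
        simp [pow_one]
        ring
      rw [this]
      exact div_pos (sub_pos.mpr hlt) (hWpos 1)
  calc (0:ℝ) < (∑' p : ℕ × ℕ, (F p + F p.swap)) / 2 := by positivity
    _ = ∑' p, F p := by
        rw [Summable.tsum_add hFs hFswap, hswapsum]
        ring
end

section
/- If 0 ≤ φ₁ ≤ φ₂ < φ*, then P_{φ₁} is stochastically dominated by P_{φ₂}: for every k ∈ ℕ one has P_{φ₁}({m ∈ ℕ : m ≥ k}) ≤ P_{φ₂}({m ∈ ℕ : m ≥ k}). -/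
open scoped ENNReal BigOperators

lemma zr_tail_summable (f : ℕ → ℝ) (hnn : ∀ m, 0 ≤ f m) (hs : Summable f) (k : ℕ) :
    Summable (fun m => if k ≤ m then f m else 0) :=
  Summable.of_nonneg_of_le
    (fun m => by by_cases h : k ≤ m <;> simp [h, hnn m])
    (fun m => by by_cases h : k ≤ m <;> simp [h, hnn m]) hs

lemma zr_split (f : ℕ → ℝ) (hnn : ∀ m, 0 ≤ f m) (hs : Summable f) (k : ℕ) :
    ∑' m, f m = (∑ n ∈ Finset.range k, f n) + ∑' m, (if k ≤ m then f m else 0) := by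
  have hts : Summable (fun m => if k ≤ m then f m else 0) := zr_tail_summable f hnn hs k
  have h1 := Summable.sum_add_tsum_nat_add (f := f) k hs
  have h2 := Summable.sum_add_tsum_nat_add (f := fun m => if k ≤ m then f m else 0) k hts
  have hzero : ∑ n ∈ Finset.range k, (if k ≤ n then f n else 0) = 0 :=
    Finset.sum_eq_zero fun n hn => if_neg (not_le.mpr (Finset.mem_range.mp hn))
  have htail : ∀ i : ℕ, (if k ≤ i + k then f (i + k) else 0) = f (i + k) :=
    fun i => if_pos (Nat.le_add_left k i)
  rw [hzero, zero_add] at h2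
  simp only [htail] at h2
  linarith

/-- If `0 ≤ φ₁ ≤ φ₂ < φ*` then `P_{φ₁}` is stochastically dominated by `P_{φ₂}`:
for every `k`, `P_{φ₁}({m : m ≥ k}) ≤ P_{φ₂}({m : m ≥ k})`. -/
theorem stmt5 (g : ℕ → ℝ) (hmono : Monotone g) (hg0 : g 0 = 0)
    (hgpos : ∀ k : ℕ, 1 ≤ k → 0 < g k)
    (φstar : ℝ≥0∞) (hφstar : 0 < φstar) (hrad : IsConvRadius g φstar)
    (φ₁ φ₂ : ℝ) (h0 : 0 ≤ φ₁) (h12 : φ₁ ≤ φ₂) (h2 : ENNReal.ofReal φ₂ < φstar) :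
    ∀ k : ℕ, (∑' m : ℕ, if k ≤ m then Pzr g φ₁ m else 0) ≤
      ∑' m : ℕ, if k ≤ m then Pzr g φ₂ m else 0 := by
  intro k
  have hφ₂ : 0 ≤ φ₂ := h0.trans h12
  have hgp : ∀ m, 0 < gfact g m := gfact_pos g hgpos
  set f₁ : ℕ → ℝ := fun m => φ₁ ^ m / gfact g m with hf₁
  set f₂ : ℕ → ℝ := fun m => φ₂ ^ m / gfact g m with hf₂
  have hs₂ : Summable f₂ := hrad.1 φ₂ hφ₂ h2
  have hs₁ : Summable f₁ :=
    hrad.1 φ₁ h0 (lt_of_le_of_lt (ENNReal.ofReal_le_ofReal h12) h2)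
  have hnn₁ : ∀ m, 0 ≤ f₁ m := fun m => div_nonneg (pow_nonneg h0 m) (hgp m).le
  have hnn₂ : ∀ m, 0 ≤ f₂ m := fun m => div_nonneg (pow_nonneg hφ₂ m) (hgp m).le
  set t₁ : ℕ → ℝ := fun m => if k ≤ m then f₁ m else 0 with ht₁
  set t₂ : ℕ → ℝ := fun m => if k ≤ m then f₂ m else 0 with ht₂
  have hts₁ : Summable t₁ := zr_tail_summable f₁ hnn₁ hs₁ k
  have hts₂ : Summable t₂ := zr_tail_summable f₂ hnn₂ hs₂ k
  set T₁ : ℝ := ∑' m, t₁ m with hT₁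
  set T₂ : ℝ := ∑' m, t₂ m with hT₂
  have hTnn₁ : 0 ≤ T₁ := tsum_nonneg fun m => by
    by_cases h : k ≤ m <;> simp [ht₁, h, hnn₁ m]
  have hTnn₂ : 0 ≤ T₂ := tsum_nonneg fun m => by
    by_cases h : k ≤ m <;> simp [ht₂, h, hnn₂ m]
  -- key pairwise inequality
  have key : ∀ n, n < k → T₁ * φ₂ ^ n ≤ T₂ * φ₁ ^ n := by
    intro n hn
    rw [hT₁, hT₂, ← tsum_mul_right, ← tsum_mul_right]
    refine Summable.tsum_le_tsum ?_ (hts₁.mul_right _) (hts₂.mul_right _)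
    intro m
    simp only [ht₁, ht₂]
    by_cases hkm : k ≤ m
    · simp only [if_pos hkm]
      have hnm : n ≤ m := le_of_lt (lt_of_lt_of_le hn hkm)
      have hnum : φ₁ ^ m * φ₂ ^ n ≤ φ₂ ^ m * φ₁ ^ n := by
        have e1 : φ₁ ^ m = φ₁ ^ n * φ₁ ^ (m - n) := by
          rw [← pow_add, Nat.add_sub_cancel' hnm]
        have e2 : φ₂ ^ m = φ₂ ^ n * φ₂ ^ (m - n) := by
          rw [← pow_add, Nat.add_sub_cancel' hnm]
        have hp : φ₁ ^ (m - n) ≤ φ₂ ^ (m - n) := pow_le_pow_left₀ h0 h12 _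
        have h1n : (0:ℝ) ≤ φ₁ ^ n := pow_nonneg h0 n
        have h2n : (0:ℝ) ≤ φ₂ ^ n := pow_nonneg hφ₂ n
        rw [e1, e2]
        nlinarith [mul_le_mul_of_nonneg_left hp (mul_nonneg h1n h2n)]
      rw [div_mul_eq_mul_div, div_mul_eq_mul_div,
        div_le_div_iff₀ (hgp m) (hgp m)]
      exact mul_le_mul_of_nonneg_right hnum (hgp m).le
    · simp [if_neg hkm]
  -- rewrite the goal
  have hP : ∀ φ : ℝ, (fun m => if k ≤ m then Pzr g φ m else 0)
      = fun m => (if k ≤ m then φ ^ m / gfact g m else 0) / Zfun g φ := by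
    intro φ; funext m
    by_cases h : k ≤ m
    · simp only [if_pos h, Pzr, div_div, mul_comm]
    · simp [if_neg h]
  have hZone₁ : (1:ℝ) ≤ Zfun g φ₁ := by
    have h0' : f₁ 0 ≤ ∑' m, f₁ m := Summable.le_tsum hs₁ 0 fun i _ => hnn₁ i
    have : f₁ 0 = 1 := by simp [hf₁, gfact]
    rw [this] at h0'
    exact h0'
  have hZone₂ : (1:ℝ) ≤ Zfun g φ₂ := by
    have h0' : f₂ 0 ≤ ∑' m, f₂ m := Summable.le_tsum hs₂ 0 fun i _ => hnn₂ i
    have : f₂ 0 = 1 := by simp [hf₂, gfact]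
    rw [this] at h0'
    exact h0'
  have hZp₁ : (0:ℝ) < Zfun g φ₁ := lt_of_lt_of_le one_pos hZone₁
  have hZp₂ : (0:ℝ) < Zfun g φ₂ := lt_of_lt_of_le one_pos hZone₂
  have hZ₁ : Zfun g φ₁ = (∑ n ∈ Finset.range k, f₁ n) + T₁ := zr_split f₁ hnn₁ hs₁ k
  have hZ₂ : Zfun g φ₂ = (∑ n ∈ Finset.range k, f₂ n) + T₂ := zr_split f₂ hnn₂ hs₂ k
  set S₁ : ℝ := ∑ n ∈ Finset.range k, f₁ n with hS₁
  set S₂ : ℝ := ∑ n ∈ Finset.range k, f₂ n with hS₂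
  have hmain : T₁ * S₂ ≤ T₂ * S₁ := by
    rw [hS₁, hS₂, Finset.mul_sum, Finset.mul_sum]
    refine Finset.sum_le_sum fun n hn => ?_
    have hn' : n < k := Finset.mem_range.mp hn
    simp only [hf₁, hf₂]
    rw [← mul_div_assoc, ← mul_div_assoc, div_le_div_iff₀ (hgp n) (hgp n)]
    exact mul_le_mul_of_nonneg_right (key n hn') (hgp n).le
  calc (∑' m : ℕ, if k ≤ m then Pzr g φ₁ m else 0) = T₁ / Zfun g φ₁ := by
        rw [show (fun m => if k ≤ m then Pzr g φ₁ m else 0)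
            = fun m => t₁ m / Zfun g φ₁ from hP φ₁, tsum_div_const]
    _ ≤ T₂ / Zfun g φ₂ := by
        rw [div_le_div_iff₀ hZp₁ hZp₂, hZ₁, hZ₂]
        nlinarith
    _ = ∑' m : ℕ, if k ≤ m then Pzr g φ₂ m else 0 := by
        rw [show (fun m => if k ≤ m then Pzr g φ₂ m else 0)
            = fun m => t₂ m / Zfun g φ₂ from hP φ₂, tsum_div_const]
end

section
/- Let c : ℤ/Nℤ → {1,2,3} be admissible. Call j ∈ ℤ/Nℤ a center if it is not the case that both c(j−1) = 2 and c(j) = 3, and for each center j define the tile T(j) ⊆ (ℤ/Nℤ) × {−1,1} to consist of (j,1) and (j,−1), together with (j+1,1) if c(j) = 2, and together with (j−1,−1) if c(j−1) = 3. Then the tiles of distinct centers are pairwise disjoint and their union is all of (ℤ/Nℤ) × {−1,1}; moreover every tile has cardinality between 2 and 4, and the sum of the cardinalities of all tiles equals 2N. -/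
/-- A column `j` is a tile center unless `c(j−1) = 2` and `c(j) = 3`. -/
def IsCenter (N : ℕ) (c : ZMod N → ℕ) (j : ZMod N) : Prop :=
  ¬(c (j - 1) = 2 ∧ c j = 3)

/-- The tile with center `j`: the vertices `(j,1)`, `(j,−1)`, together with
`(j+1,1)` if `c(j) = 2`, and `(j−1,−1)` if `c(j−1) = 3`. -/
def tile (N : ℕ) (c : ZMod N → ℕ) (j : ZMod N) : Set (ZMod N × ℤ) :=
  ({((j : ZMod N), (1 : ℤ)), (j, -1)} : Set (ZMod N × ℤ)) ∪
    (if c j = 2 then {(j + 1, 1)} else ∅) ∪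
    (if c (j - 1) = 3 then {(j - 1, -1)} else ∅)

lemma mem_tile_iff (N : ℕ) (c : ZMod N → ℕ) (j : ZMod N) (x : ZMod N × ℤ) :
    x ∈ tile N c j ↔ x = (j,1) ∨ x = (j,-1) ∨ (c j = 2 ∧ x = (j+1,1)) ∨
      (c (j-1) = 3 ∧ x = (j-1,-1)) := by
  simp only [tile, Set.mem_union, Set.mem_insert_iff, Set.mem_singleton_iff]
  split_ifs with h1 h2 <;> simp [h1, *] <;> tauto

/-- For an admissible `c`, the tiles of distinct centers are pairwise disjoint,
their union is all of `(ℤ/Nℤ) × {−1,1}`, every tile has between 2 and 4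
vertices, and the total number of vertices in all tiles is `2N`. -/
theorem stmt10 (N : ℕ) (hN : 2 ≤ N) (c : ZMod N → ℕ)
    (hvals : ∀ j : ZMod N, c j = 1 ∨ c j = 2 ∨ c j = 3)
    (hadm : ∀ j : ZMod N, (c j = 2 → c (j + 1) = 3) ∧ (c j = 3 → c (j - 1) = 2)) :
    (∀ j₁ j₂ : ZMod N, IsCenter N c j₁ → IsCenter N c j₂ → j₁ ≠ j₂ →
      Disjoint (tile N c j₁) (tile N c j₂)) ∧
    (⋃ j ∈ {j : ZMod N | IsCenter N c j}, tile N c j) =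
      (Set.univ : Set (ZMod N)) ×ˢ ({1, -1} : Set ℤ) ∧
    (∀ j : ZMod N, IsCenter N c j →
      2 ≤ (tile N c j).ncard ∧ (tile N c j).ncard ≤ 4) ∧
    (∑ᶠ j ∈ {j : ZMod N | IsCenter N c j}, (tile N c j).ncard) = 2 * N := by
  haveI : NeZero N := ⟨by omega⟩
  haveI : Fact (1 < N) := ⟨by omega⟩
  -- basic arithmetic facts in ZMod N
  have hsub1 : ∀ j : ZMod N, j - 1 + 1 = j := fun j => sub_add_cancel j 1
  have hadd1 : ∀ j : ZMod N, j + 1 - 1 = j := fun j => add_sub_cancel_right j 1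
  have hne1 : ∀ j : ZMod N, j + 1 ≠ j := by
    intro j h
    have : (1 : ZMod N) = 0 := by
      have := sub_eq_zero.mpr h
      simpa [add_sub_cancel_left] using this
    exact one_ne_zero this
  -- c j = 3 ↔ c (j-1) = 2
  have h32 : ∀ j : ZMod N, c j = 3 ↔ c (j - 1) = 2 := by
    intro j
    constructor
    · exact (hadm j).2
    · intro h
      have := (hadm (j - 1)).1 h
      rwa [hsub1 j] at this
  -- IsCenter iff c j ≠ 3
  have hcen : ∀ j : ZMod N, IsCenter N c j ↔ c j ≠ 3 := by
    intro j
    unfold IsCenter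
    constructor
    · intro h h3
      exact h ⟨(h32 j).1 h3, h3⟩
    · intro h h'
      exact h h'.2
  -- disjointness
  have hdisj : ∀ j₁ j₂ : ZMod N, IsCenter N c j₁ → IsCenter N c j₂ → j₁ ≠ j₂ →
      Disjoint (tile N c j₁) (tile N c j₂) := by
    intro j₁ j₂ hc1 hc2 hne
    rw [hcen] at hc1 hc2
    rw [Set.disjoint_left]
    rintro x hx1 hx2
    rw [mem_tile_iff] at hx1 hx2
    have key : ∀ a b : ZMod N, c a ≠ 3 → c b = 2 → a ≠ b + 1 := by
      intro a b ha hb hab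
      exact ha (hab ▸ (hadm b).1 hb)
    have key2 : ∀ a b : ZMod N, c a ≠ 3 → c (b - 1) = 3 → a ≠ b - 1 := by
      intro a b ha hb hab
      exact ha (hab ▸ hb)
    rcases hx1 with h | h | ⟨h2, h⟩ | ⟨h3, h⟩ <;>
      rcases hx2 with h' | h' | ⟨h2', h'⟩ | ⟨h3', h'⟩ <;>
      rw [h] at h' <;> simp only [Prod.mk.injEq] at h' <;>
      first
        | exact hne h'.1
        | omega
        | exact key j₁ j₂ hc1 h2' h'.1
        | exact key j₂ j₁ hc2 h2 h'.1.symm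
        | exact key2 j₁ j₂ hc1 h3' h'.1
        | exact key2 j₂ j₁ hc2 h3 h'.1.symm
        | exact hne (by rw [← hadd1 j₁, h'.1, hadd1])
        | exact hne (by rw [← hsub1 j₁, h'.1, hsub1])
  -- union
  have hunion : (⋃ j ∈ {j : ZMod N | IsCenter N c j}, tile N c j) =
      (Set.univ : Set (ZMod N)) ×ˢ ({1, -1} : Set ℤ) := by
    ext ⟨k, e⟩
    simp only [Set.mem_iUnion, Set.mem_setOf_eq, Set.mem_prod, Set.mem_univ, true_and,
      Set.mem_insert_iff, Set.mem_singleton_iff]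
    constructor
    · rintro ⟨j, hj, hx⟩
      rw [mem_tile_iff] at hx
      rcases hx with h | h | ⟨_, h⟩ | ⟨_, h⟩ <;> simp [Prod.ext_iff] at h <;> tauto
    · rintro (rfl | rfl)
      · by_cases h3 : c k = 3
        · refine ⟨k - 1, ?_, ?_⟩
          · rw [hcen]
            intro hk3
            have := (h32 k).1 h3
            omega
          · rw [mem_tile_iff]
            right; right; left
            exact ⟨(h32 k).1 h3, by rw [hsub1]⟩
        · exact ⟨k, (hcen k).2 h3, by rw [mem_tile_iff]; tauto⟩
      · by_cases h3 : c k = 3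
        · refine ⟨k + 1, ?_, ?_⟩
          · rw [hcen]
            intro hk3
            have := (h32 (k+1)).1 hk3
            rw [hadd1] at this
            omega
          · rw [mem_tile_iff]
            right; right; right
            rw [hadd1]
            exact ⟨h3, rfl⟩
        · exact ⟨k, (hcen k).2 h3, by rw [mem_tile_iff]; tauto⟩
  refine ⟨hdisj, hunion, ?_, ?_⟩
  · -- cardinality bounds
    intro j _
    have hfin : (tile N c j).Finite := by
      apply Set.Finite.union; apply Set.Finite.union
      · exact (Set.finite_singleton _).insert _
      · split_ifs <;> simp
      · split_ifs <;> simp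
    constructor
    · have hsub : ({(j, (1:ℤ)), (j, -1)} : Set (ZMod N × ℤ)) ⊆ tile N c j := by
        intro x hx
        rw [mem_tile_iff]
        simp at hx
        tauto
      have : ({(j, (1:ℤ)), (j, -1)} : Set (ZMod N × ℤ)).ncard = 2 := by
        rw [Set.ncard_pair]
        simp
      rw [← this]
      exact Set.ncard_le_ncard hsub hfin
    · have hsub : tile N c j ⊆ {(j, (1:ℤ)), (j, -1), (j+1, 1), (j-1, -1)} := by
        intro x hx
        rw [mem_tile_iff] at hx
        simp only [Set.mem_insert_iff, Set.mem_singleton_iff]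
        tauto
      calc (tile N c j).ncard ≤ ({(j, (1:ℤ)), (j, -1), (j+1, 1), (j-1, -1)} : Set (ZMod N × ℤ)).ncard :=
            Set.ncard_le_ncard hsub (Set.toFinite _)
        _ ≤ 4 := by
            apply le_trans (Set.ncard_insert_le _ _)
            have := Set.ncard_insert_le ((j:ZMod N), (-1:ℤ)) ({((j:ZMod N)+1, (1:ℤ)), (j-1, -1)} : Set (ZMod N × ℤ))
            have h2 := Set.ncard_insert_le ((j:ZMod N)+1, (1:ℤ)) ({((j:ZMod N)-1, (-1:ℤ))} : Set (ZMod N × ℤ))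
            simp only [Set.ncard_singleton] at *
            omega
  · -- total count
    classical
    set F : Finset (ZMod N) := Finset.univ.filter (fun j => IsCenter N c j) with hF
    have hSF : {j : ZMod N | IsCenter N c j} = ↑F := by
      ext j; simp [hF]
    set tileF : ZMod N → Finset (ZMod N × ℤ) := fun j =>
      ({(j, (1:ℤ)), (j, -1)} : Finset (ZMod N × ℤ)) ∪
        (if c j = 2 then {(j + 1, 1)} else ∅) ∪
        (if c (j - 1) = 3 then {(j - 1, -1)} else ∅) with htileF
    have hcoe : ∀ j, ↑(tileF j) = tile N c j := by
      intro j
      simp only [htileF, tile, Finset.coe_union, Finset.coe_insert, Finset.coe_singleton]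
      split_ifs <;> simp
    have hncard : ∀ j, (tile N c j).ncard = (tileF j).card := by
      intro j
      rw [← hcoe, Set.ncard_coe_finset]
    rw [hSF, finsum_mem_coe_finset]
    have hdF : ∀ j₁ ∈ F, ∀ j₂ ∈ F, j₁ ≠ j₂ → Disjoint (tileF j₁) (tileF j₂) := by
      intro j₁ h1 j₂ h2 hne
      rw [← Finset.disjoint_coe, hcoe, hcoe]
      simp only [hF, Finset.mem_filter] at h1 h2
      exact hdisj j₁ j₂ h1.2 h2.2 hne
    calc ∑ j ∈ F, (tile N c j).ncard = ∑ j ∈ F, (tileF j).card := by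
          exact Finset.sum_congr rfl (fun j _ => hncard j)
      _ = (F.biUnion tileF).card := (Finset.card_biUnion hdF).symm
      _ = (Finset.univ ×ˢ ({1, -1} : Finset ℤ)).card := by
          congr 1
          apply Finset.coe_injective
          rw [Finset.coe_biUnion]
          have : (⋃ j ∈ (F : Set (ZMod N)), ↑(tileF j)) =
              (⋃ j ∈ {j : ZMod N | IsCenter N c j}, tile N c j) := by
            rw [hSF]
            exact Set.iUnion₂_congr (fun j _ => hcoe j)
          rw [this, hunion]
          simp [Set.prod_eq]
      _ = 2 * N := by
          rw [Finset.card_product]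
          simp [ZMod.card]
          ring
end

section
/- Let Φ : ℝ → ℝ be twice continuously differentiable and monotone nondecreasing, let κ > 0, T > 0, and let K₁ ≤ K₂ be real constants. Suppose ρ : [0,T] × 𝕋 → ℝ is continuous, the map x ↦ Φ(ρ(t,x)) is twice continuously differentiable in x for t > 0, t ↦ ρ(t,x) is differentiable for t > 0, the partial derivatives are jointly continuous on (0,T] × 𝕋, and ρ solves ∂_t ρ(t,x) = κ · ∂²_x (Φ(ρ(t,·)))(x) for all (t,x) ∈ (0,T] × 𝕋. If K₁ ≤ ρ(0,x) ≤ K₂ for all x ∈ 𝕋, then K₁ ≤ ρ(t,x) ≤ K₂ for all (t,x) ∈ [0,T] × 𝕋 (maximum principle for the quasilinear heat equation ∂_t ρ = κ ∂²_x Φ(ρ)). -/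
/-!
Perturb the solution to `ρ t x - ε t` and take its maximum over `[0, T] × 𝕋`, which exists by
compactness. At a maximum with `t > 0` the time derivative of `ρ` is at least `ε`, while
spatially `Φ ∘ ρ t` is maximal as well (monotonicity of `Φ`), so `κ ∂²ₓ Φ(ρ) ≤ 0`; this
contradicts the equation. Hence the maximum sits at `t = 0`, giving `ρ ≤ K₂ + ε t`, and
`ε → 0` yields the upper bound. The lower bound follows by applying this to `-ρ`, which solves
the equation for the monotone nonlinearity `y ↦ -Φ (-y)`.
-/

open Set Filter Topology

theorem IsLocalMax.deriv_deriv_nonpos {f : ℝ → ℝ} {a : ℝ} (h : IsLocalMax f a)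
    (hf : ContinuousAt f a) : deriv (deriv f) a ≤ 0 := by
  by_contra! hpos
  -- by the second-derivative test `a` would also be a local min, so `f` is locally constant
  have hconst : f =ᶠ[𝓝 a] fun _ => f a :=
    ((isLocalMin_of_deriv_deriv_pos hpos h.deriv_eq_zero hf).and h).mono
      fun _ hy => le_antisymm hy.2 hy.1
  have : deriv (deriv f) a = 0 := by
    rw [hconst.deriv.deriv_eq]
    simp
  exact hpos.ne' this

theorem IsMaxOn.deriv_nonneg_of_Icc {f : ℝ → ℝ} {a b : ℝ} (h : IsMaxOn f (Icc a b) b)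
    (hab : a < b) (hf : DifferentiableAt ℝ f b) : 0 ≤ deriv f b := by
  have hcone : a - b ∈ posTangentConeAt (Icc a b) b :=
    sub_mem_posTangentConeAt_of_segment_subset (by rw [segment_symm, segment_eq_Icc hab.le])
  have := h.localize.hasFDerivWithinAt_nonpos
    hf.hasDerivAt.hasDerivWithinAt.hasFDerivWithinAt hcone
  rw [ContinuousLinearMap.toSpanSingleton_apply, smul_eq_mul] at this
  exact nonneg_of_mul_nonpos_right this (sub_neg.2 hab)

theorem exists_isMaxOn_prod_univ_of_periodic {u : ℝ → ℝ → ℝ} {s : Set ℝ} {c : ℝ}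
    (hs : IsCompact s) (hne : s.Nonempty) (hc : 0 < c) (hper : ∀ t, Function.Periodic (u t) c)
    (hu : ContinuousOn (fun p : ℝ × ℝ => u p.1 p.2) (s ×ˢ univ)) :
    ∃ p ∈ s ×ˢ univ, IsMaxOn (fun p : ℝ × ℝ => u p.1 p.2) (s ×ˢ univ) p := by
  obtain ⟨p, hp, hmax⟩ := (hs.prod isCompact_Icc).exists_isMaxOn
    (hne.prod (nonempty_Icc.2 hc.le)) (hu.mono (prod_mono subset_rfl (subset_univ _)))
  refine ⟨p, ⟨hp.1, mem_univ _⟩, fun q hq => ?_⟩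
  obtain ⟨y, hy, hqy⟩ := (hper q.1).exists_mem_Ico₀ hc q.2
  have := hmax (show (q.1, y) ∈ s ×ˢ Icc 0 c from ⟨hq.1, Ico_subset_Icc_self hy⟩)
  simpa [hqy] using this

structure IsQuasilinearHeatSolution (Φ : ℝ → ℝ) (κ T : ℝ) (ρ : ℝ → ℝ → ℝ) : Prop where
  periodic : ∀ t, Function.Periodic (ρ t) 1
  continuousOn : ContinuousOn (fun p : ℝ × ℝ => ρ p.1 p.2) (Icc 0 T ×ˢ univ)
  continuous_space : ∀ t ∈ Ioc 0 T, Continuous fun x => Φ (ρ t x)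
  differentiableAt_time : ∀ x, ∀ t ∈ Ioc 0 T, DifferentiableAt ℝ (fun s => ρ s x) t
  deriv_time_eq : ∀ t ∈ Ioc 0 T, ∀ x,
    deriv (fun s => ρ s x) t = κ * deriv (deriv fun y => Φ (ρ t y)) x

namespace IsQuasilinearHeatSolution

variable {Φ : ℝ → ℝ} {κ T K : ℝ} {ρ : ℝ → ℝ → ℝ}

theorem neg (h : IsQuasilinearHeatSolution Φ κ T ρ) :
    IsQuasilinearHeatSolution (fun y => -Φ (-y)) κ T (fun t x => -ρ t x) where
  periodic t x := congrArg Neg.neg (h.periodic t x)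
  continuousOn := h.continuousOn.neg
  continuous_space t ht := by
    simp only [neg_neg]
    exact (h.continuous_space t ht).neg
  differentiableAt_time x t ht := (h.differentiableAt_time x t ht).neg
  deriv_time_eq t ht x := by
    simp only [neg_neg, deriv.fun_neg, deriv.fun_neg', h.deriv_time_eq t ht x, mul_neg]

theorem le_add_mul_of_initial_le (h : IsQuasilinearHeatSolution Φ κ T ρ) (hΦ : Monotone Φ)
    (hκ : 0 ≤ κ) (hinit : ∀ x, ρ 0 x ≤ K) {ε : ℝ} (hε : 0 < ε) :
    ∀ t ∈ Icc 0 T, ∀ x, ρ t x ≤ K + ε * t := by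
  intro t ht x
  set u : ℝ → ℝ → ℝ := fun s y => ρ s y - ε * s
  obtain ⟨⟨t₀, x₀⟩, ⟨ht₀, -⟩, hmax⟩ := exists_isMaxOn_prod_univ_of_periodic (u := u)
    isCompact_Icc ⟨t, ht⟩ one_pos (fun s y => by simp only [u, h.periodic s y])
    (h.continuousOn.sub ((continuous_const.mul continuous_fst).continuousOn))
  suffices ht₀_zero : t₀ = 0 by
    have := hmax (show (t, x) ∈ Icc 0 T ×ˢ univ from ⟨ht, mem_univ x⟩)
    simp only [u, ht₀_zero, mul_zero, sub_zero, mem_ofPred_eq] at this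
    linarith [hinit x₀]
  by_contra ht₀_zero
  have ht₀pos : t₀ ∈ Ioc 0 T := ⟨lt_of_le_of_ne ht₀.1 (Ne.symm ht₀_zero), ht₀.2⟩
  have hspace : deriv (deriv fun y => Φ (ρ t₀ y)) x₀ ≤ 0 := by
    refine IsLocalMax.deriv_deriv_nonpos (Eventually.of_forall fun y => hΦ ?_)
      (h.continuous_space t₀ ht₀pos).continuousAt
    have := hmax (show (t₀, y) ∈ Icc 0 T ×ˢ univ from ⟨ht₀, mem_univ y⟩)
    simp only [u, mem_ofPred_eq] at this
    linarith
  have htime : ε ≤ deriv (fun s => ρ s x₀) t₀ := by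
    have hderiv : HasDerivAt (fun s => ρ s x₀ - ε * s) (deriv (fun s => ρ s x₀) t₀ - ε) t₀ := by
      simpa using (h.differentiableAt_time x₀ t₀ ht₀pos).hasDerivAt.fun_sub
        ((hasDerivAt_id t₀).const_mul ε)
    have hmax_time : IsMaxOn (fun s => ρ s x₀ - ε * s) (Icc 0 t₀) t₀ := fun s hs =>
      hmax (show (s, x₀) ∈ Icc 0 T ×ˢ univ from ⟨⟨hs.1, hs.2.trans ht₀.2⟩, mem_univ x₀⟩)
    have := hmax_time.deriv_nonneg_of_Icc ht₀pos.1 hderiv.differentiableAt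
    rw [hderiv.deriv] at this
    linarith
  have := h.deriv_time_eq t₀ ht₀pos x₀
  linarith [mul_nonpos_of_nonneg_of_nonpos hκ hspace]

theorem le_of_initial_le (h : IsQuasilinearHeatSolution Φ κ T ρ) (hΦ : Monotone Φ)
    (hκ : 0 ≤ κ) (hinit : ∀ x, ρ 0 x ≤ K) : ∀ t ∈ Icc 0 T, ∀ x, ρ t x ≤ K := by
  intro t ht x
  have hlim : Tendsto (fun ε => K + ε * t) (𝓝[>] 0) (𝓝 K) :=
    (Continuous.tendsto' (f := fun ε => K + ε * t) (by fun_prop) 0 K (by simp)).mono_left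
      nhdsWithin_le_nhds
  exact ge_of_tendsto hlim (eventually_nhdsWithin_of_forall fun ε hε =>
    h.le_add_mul_of_initial_le hΦ hκ hinit hε t ht x)

theorem ge_of_initial_ge (h : IsQuasilinearHeatSolution Φ κ T ρ) (hΦ : Monotone Φ)
    (hκ : 0 ≤ κ) (hinit : ∀ x, K ≤ ρ 0 x) : ∀ t ∈ Icc 0 T, ∀ x, K ≤ ρ t x := fun t ht x =>
  neg_le_neg_iff.1 <| h.neg.le_of_initial_le
    (fun _ _ hab => neg_le_neg (hΦ (neg_le_neg hab))) hκ (fun x => neg_le_neg (hinit x)) t ht x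

end IsQuasilinearHeatSolution

theorem stmt12_general (Φ : ℝ → ℝ) (hΦmono : Monotone Φ)
    (κ T K₁ K₂ : ℝ) (hκ : 0 < κ)
    (ρ : ℝ → ℝ → ℝ)
    (hper : ∀ t x : ℝ, ρ t (x + 1) = ρ t x)
    (hcont : ContinuousOn (fun p : ℝ × ℝ => ρ p.1 p.2)
      (Set.Icc 0 T ×ˢ (Set.univ : Set ℝ)))
    (hx : ∀ t ∈ Set.Ioc (0 : ℝ) T, ContDiff ℝ 2 (fun x => Φ (ρ t x)))
    (ht : ∀ x : ℝ, ∀ t ∈ Set.Ioc (0 : ℝ) T, DifferentiableAt ℝ (fun s => ρ s x) t)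
    (hpde : ∀ t ∈ Set.Ioc (0 : ℝ) T, ∀ x : ℝ,
      deriv (fun s => ρ s x) t = κ * deriv (deriv (fun y => Φ (ρ t y))) x)
    (hinit : ∀ x : ℝ, K₁ ≤ ρ 0 x ∧ ρ 0 x ≤ K₂) :
    ∀ t ∈ Set.Icc (0 : ℝ) T, ∀ x : ℝ, K₁ ≤ ρ t x ∧ ρ t x ≤ K₂ := by
  have hsol : IsQuasilinearHeatSolution Φ κ T ρ :=
    ⟨hper, hcont, fun t ht => (hx t ht).continuous, ht, hpde⟩
  intro t htT x
  exact ⟨hsol.ge_of_initial_ge hΦmono hκ.le (fun x => (hinit x).1) t htT x,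
    hsol.le_of_initial_le hΦmono hκ.le (fun x => (hinit x).2) t htT x⟩

/-- Maximum principle for the quasilinear heat equation `∂_t ρ = κ ∂²_x Φ(ρ)` on
the torus `𝕋 = ℝ/ℤ` (encoded as 1-periodic functions on `ℝ`): if the initial
condition takes values in `[K₁, K₂]`, so does the solution for all times in
`[0, T]`. -/
theorem stmt12 (Φ : ℝ → ℝ) (hΦ : ContDiff ℝ 2 Φ) (hΦmono : Monotone Φ)
    (κ T K₁ K₂ : ℝ) (hκ : 0 < κ) (hT : 0 < T) (hK : K₁ ≤ K₂)
    (ρ : ℝ → ℝ → ℝ)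
    (hper : ∀ t x : ℝ, ρ t (x + 1) = ρ t x)
    (hcont : ContinuousOn (fun p : ℝ × ℝ => ρ p.1 p.2)
      (Set.Icc 0 T ×ˢ (Set.univ : Set ℝ)))
    (hx : ∀ t ∈ Set.Ioc (0 : ℝ) T, ContDiff ℝ 2 (fun x => Φ (ρ t x)))
    (ht : ∀ x : ℝ, ∀ t ∈ Set.Ioc (0 : ℝ) T, DifferentiableAt ℝ (fun s => ρ s x) t)
    (hcont2 : ContinuousOn
      (fun p : ℝ × ℝ => deriv (deriv (fun y => Φ (ρ p.1 y))) p.2)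
      (Set.Ioc 0 T ×ˢ (Set.univ : Set ℝ)))
    (hcont3 : ContinuousOn (fun p : ℝ × ℝ => deriv (fun s => ρ s p.2) p.1)
      (Set.Ioc 0 T ×ˢ (Set.univ : Set ℝ)))
    (hpde : ∀ t ∈ Set.Ioc (0 : ℝ) T, ∀ x : ℝ,
      deriv (fun s => ρ s x) t = κ * deriv (deriv (fun y => Φ (ρ t y))) x)
    (hinit : ∀ x : ℝ, K₁ ≤ ρ 0 x ∧ ρ 0 x ≤ K₂) :
    ∀ t ∈ Set.Icc (0 : ℝ) T, ∀ x : ℝ, K₁ ≤ ρ t x ∧ ρ t x ≤ K₂ :=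
  stmt12_general Φ hΦmono κ T K₁ K₂ hκ ρ hper hcont hx ht hpde hinit
end
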